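/- arXiv:2008.05280 — 8 statements merged into one kernel-verified Lean document; each statement's English description precedes it below -/
import Mathlib

section
/- Let K be a number field with ring of integers O_K, let w = (w_0, ..., w_n) be a tuple of positive integers, and let x ∈ K^{n+1} be nonzero. Then the scaling ideal I_w(x) (the intersection of all fractional ideals a of O_K such that x_i ∈ a^{w_i} for all i) is a nonzero fractional ideal, and its inverse equals {a ∈ K : a^{w_i} x_i ∈ O_K for i = 0, ..., n}. -/
open NumberField FractionalIdeal
open scoped nonZeroDivisors

section Aux

variable {K : Type*} [Field K] [NumberField K]

lemma aux_mem_one_iff {y : K} :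
    y ∈ (1 : FractionalIdeal (𝓞 K)⁰ K) ↔ IsIntegral ℤ y := by
  rw [FractionalIdeal.mem_one_iff]
  constructor
  · rintro ⟨r, rfl⟩; exact RingOfIntegers.isIntegral_coe r
  · intro h; exact ⟨⟨y, h⟩, rfl⟩

lemma aux_coe_isIntegral (r : 𝓞 K) : IsIntegral ℤ (r : K) :=
  RingOfIntegers.isIntegral_coe r

lemma aux_natCast_isIntegral (m : ℕ) : IsIntegral ℤ ((m : ℕ) : K) := by
  have h : ((m : ℕ) : K) = algebraMap ℤ K (m : ℤ) := by simp
  rw [h]; exact isIntegral_algebraMap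

/-- Key binomial lemma: if `p * y ^ w` and `p * z ^ w` are integral then so is
`p * (y + z) ^ w`. -/
lemma aux_key_add {w : ℕ} (hw : 0 < w) {p y z : K}
    (hy : IsIntegral ℤ (p * y ^ w)) (hz : IsIntegral ℤ (p * z ^ w)) :
    IsIntegral ℤ (p * (y + z) ^ w) := by
  rw [add_pow, Finset.mul_sum]
  refine IsIntegral.sum _ fun k hk => ?_
  have hkw : k ≤ w := Nat.lt_succ_iff.mp (Finset.mem_range.mp hk)
  have h1 : IsIntegral ℤ (p * (y ^ k * z ^ (w - k))) := by
    refine IsIntegral.of_pow hw ?_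
    have hid : (p * (y ^ k * z ^ (w - k))) ^ w
        = (p * y ^ w) ^ k * (p * z ^ w) ^ (w - k) := by
      have hp : p ^ w = p ^ k * p ^ (w - k) := by
        rw [← pow_add, Nat.add_sub_cancel' hkw]
      rw [mul_pow, mul_pow, mul_pow, mul_pow, hp,
        ← pow_mul, ← pow_mul, ← pow_mul, ← pow_mul,
        Nat.mul_comm k w, Nat.mul_comm (w - k) w]
      ring
    rw [hid]
    exact (hy.pow k).mul (hz.pow (w - k))
  have := h1.mul (aux_natCast_isIntegral (K := K) (Nat.choose w k))
  convert this using 1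
  ring

end Aux

section Construction

variable (K : Type*) [Field K] [NumberField K]

/-- The submodule `{y | ∀ i, y ^ (w i) * x i is integral}`. -/
def Jsub {n : ℕ} (w : Fin (n + 1) → ℕ+) (x : Fin (n + 1) → K) :
    Submodule (𝓞 K) K where
  carrier := {y | ∀ i, IsIntegral ℤ (y ^ (w i : ℕ) * x i)}
  zero_mem' := fun i => by
    rw [zero_pow (w i).pos.ne', zero_mul]; exact isIntegral_zero
  add_mem' := by
    intro y z hy hz i
    have := aux_key_add (w i).pos (p := x i) (y := y) (z := z)
      (by rw [mul_comm]; exact hy i) (by rw [mul_comm]; exact hz i)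
    rwa [mul_comm] at this
  smul_mem' := by
    intro c y hy i
    have h1 : (c • y) ^ (w i : ℕ) * x i = (c : K) ^ (w i : ℕ) * (y ^ (w i : ℕ) * x i) := by
      rw [Algebra.smul_def, mul_pow]; ring_nf
    rw [h1]
    exact ((aux_coe_isIntegral c).pow _).mul (hy i)

end Construction

/-- The scaling ideal `I_w(x)` of a nonzero tuple `x ∈ K^{n+1}` is a nonzero fractional
ideal (namely, there is a fractional ideal whose underlying set is the intersection of all
fractional ideals `a` with `x i ∈ a ^ (w i)` for all `i`), and its inverse equals
`{a ∈ K | a ^ (w i) * x i ∈ 𝓞 K for all i}`. -/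
theorem scaling_ideal_exists_nonzero_and_inv (K : Type*) [Field K] [NumberField K]
    (n : ℕ) (w : Fin (n + 1) → ℕ+) (x : Fin (n + 1) → K) (hx : x ≠ 0) :
    ∃ I : FractionalIdeal (𝓞 K)⁰ K, I ≠ 0 ∧
      (∀ y : K, y ∈ I ↔
        ∀ a : FractionalIdeal (𝓞 K)⁰ K, (∀ i, x i ∈ a ^ (w i : ℕ)) → y ∈ a) ∧
      (∀ y : K, y ∈ I⁻¹ ↔
        ∀ i, y ^ (w i : ℕ) * x i ∈ (1 : FractionalIdeal (𝓞 K)⁰ K)) := by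
  classical
  -- denominators for the `x i`
  have hden : ∀ i, ∃ d : (𝓞 K)⁰, ∃ c : 𝓞 K,
      (c : K) = (d : 𝓞 K) • x i := by
    intro i
    obtain ⟨d, c, hc⟩ := IsLocalization.exists_integer_multiple (𝓞 K)⁰ (x i)
    exact ⟨d, c, hc⟩
  choose d c hc using hden
  -- the submodule is fractional
  obtain ⟨i0, hi0⟩ : ∃ i, x i ≠ 0 := by
    by_contra h
    push_neg at h
    exact hx (funext fun i => h i)
  have hJfrac : IsFractional (𝓞 K)⁰ (Jsub K w x) := by
    refine ⟨c i0, ?_, ?_⟩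
    · refine mem_nonZeroDivisors_of_ne_zero ?_
      intro h
      apply hi0
      have h2 : ((c i0 : 𝓞 K) : K) = 0 := by rw [h]; simp
      rw [hc i0] at h2
      have hd0 : ((d i0 : 𝓞 K) : K) ≠ 0 := by
        simpa using nonZeroDivisors.coe_ne_zero (d i0)
      rw [Algebra.smul_def] at h2
      exact (mul_eq_zero.mp h2).resolve_left hd0
    · intro b hb
      have hbmem : ∀ i, IsIntegral ℤ (b ^ (w i : ℕ) * x i) := hb
      refine ⟨⟨(c i0 : K) * b, ?_⟩, ?_⟩
      · -- `(c i0) * b` is integral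
        refine IsIntegral.of_pow (w i0).pos ?_
        have key : ((c i0 : K) * b) ^ (w i0 : ℕ)
            = (c i0 : K) ^ ((w i0 : ℕ) - 1) * ((d i0 : 𝓞 K) : K)
              * (b ^ (w i0 : ℕ) * x i0) := by
          have h1 : (c i0 : K) ^ (w i0 : ℕ)
              = (c i0 : K) ^ ((w i0 : ℕ) - 1) * (c i0 : K) := by
            rw [← pow_succ, Nat.sub_add_cancel (w i0).pos]
          rw [mul_pow, h1, hc i0, Algebra.smul_def]
          ring_nf
        rw [key]
        exact (((aux_coe_isIntegral _).pow _).mul (aux_coe_isIntegral _)).mul (hbmem i0)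
      · simp [Algebra.smul_def, RingOfIntegers.coe_eq_algebraMap]; rfl
  set J : FractionalIdeal (𝓞 K)⁰ K := ⟨Jsub K w x, hJfrac⟩ with hJdef
  have memJ : ∀ y : K, y ∈ J ↔ ∀ i, IsIntegral ℤ (y ^ (w i : ℕ) * x i) := fun y => Iff.rfl
  -- J is nonzero
  have hJne : J ≠ 0 := by
    set D : 𝓞 K := ∏ i, (d i : 𝓞 K) with hD
    have hDne : (D : K) ≠ 0 := by
      simp only [hD]
      rw [RingOfIntegers.coe_eq_algebraMap, map_prod]
      refine Finset.prod_ne_zero_iff.mpr fun i _ => ?_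
      simpa using nonZeroDivisors.coe_ne_zero (d i)
    have hDJ : (D : K) ∈ J := by
      rw [memJ]
      intro i
      have hsplit : D = (d i : 𝓞 K) * ∏ j ∈ Finset.univ.erase i, (d j : 𝓞 K) := by
        rw [hD, ← Finset.mul_prod_erase _ _ (Finset.mem_univ i)]
      have key : (D : K) ^ (w i : ℕ) * x i
          = (D : K) ^ ((w i : ℕ) - 1) * ((∏ j ∈ Finset.univ.erase i, (d j : 𝓞 K) : 𝓞 K) : K)
            * ((c i : 𝓞 K) : K) := by
        have h1 : (D : K) ^ (w i : ℕ) = (D : K) ^ ((w i : ℕ) - 1) * (D : K) := by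
          rw [← pow_succ, Nat.sub_add_cancel (w i).pos]
        rw [h1, hc i, Algebra.smul_def, hsplit]
        push_cast [RingOfIntegers.coe_eq_algebraMap]
        ring
      rw [key]
      exact (((aux_coe_isIntegral _).pow _).mul (aux_coe_isIntegral _)).mul (aux_coe_isIntegral _)
    intro h
    rw [h, FractionalIdeal.mem_zero_iff] at hDJ
    exact hDne hDJ
  refine ⟨J⁻¹, inv_ne_zero hJne, ?_, ?_⟩
  · -- membership in J⁻¹ is membership in all constraint ideals
    intro y
    constructor
    · intro hy a ha
      have ha0 : a ≠ 0 := by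
        intro h
        apply hx
        funext i
        have := ha i
        rw [h, zero_pow (w i).pos.ne', FractionalIdeal.mem_zero_iff] at this
        simpa using this
      -- a⁻¹ ≤ J
      have hainv : a⁻¹ ≤ J := by
        rw [← FractionalIdeal.coe_le_coe]
        intro z hz
        rw [FractionalIdeal.mem_coe] at hz ⊢
        rw [memJ]
        intro i
        have h1 : z ^ (w i : ℕ) ∈ a⁻¹ ^ (w i : ℕ) := by
          have : (z : K) ∈ (a⁻¹ : FractionalIdeal (𝓞 K)⁰ K) := hz
          rw [← FractionalIdeal.mem_coe] at this ⊢
          rw [FractionalIdeal.coe_pow]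
          exact Submodule.pow_mem_pow _ this _
        have h2 : z ^ (w i : ℕ) * x i ∈ a⁻¹ ^ (w i : ℕ) * a ^ (w i : ℕ) :=
          FractionalIdeal.mul_mem_mul h1 (ha i)
        rw [← mul_pow, inv_mul_cancel₀ ha0, one_pow] at h2
        exact aux_mem_one_iff.mp h2
      -- hence J⁻¹ ≤ a
      have hle : J⁻¹ ≤ a := by
        have h3 : a⁻¹ * J⁻¹ ≤ J * J⁻¹ :=
          mul_le_mul_left hainv J⁻¹
        rw [mul_inv_cancel₀ hJne] at h3
        calc J⁻¹ = a * (a⁻¹ * J⁻¹) := by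
              rw [← mul_assoc, mul_inv_cancel₀ ha0, one_mul]
          _ ≤ a * 1 := mul_le_mul_right h3 a
          _ = a := mul_one a
      exact hle hy
    · intro hy
      refine hy J⁻¹ fun i => ?_
      rw [inv_pow]
      rw [FractionalIdeal.mem_inv_iff (pow_ne_zero _ hJne)]
      intro z hz
      have hz' : z ∈ (Jsub K w x) ^ (w i : ℕ) := by
        rw [← FractionalIdeal.mem_coe, FractionalIdeal.coe_pow] at hz
        exact hz
      have main : IsIntegral ℤ ((x i) ^ (w i : ℕ) * z ^ (w i : ℕ)) := by
        refine Submodule.pow_induction_on_left'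
          (M := Jsub K w x)
          (C := fun k t _ => IsIntegral ℤ ((x i) ^ k * t ^ (w i : ℕ)))
          ?_ ?_ ?_ hz'
        · intro r
          have : (x i) ^ 0 * (algebraMap (𝓞 K) K r) ^ (w i : ℕ)
              = ((r ^ (w i : ℕ) : 𝓞 K) : K) := by
            push_cast [RingOfIntegers.coe_eq_algebraMap]
            ring
          rw [this]
          exact aux_coe_isIntegral _
        · intro t s k _ _ ht hs
          exact aux_key_add (w i).pos ht hs
        · intro m hm k t _ ht
          have hmm : IsIntegral ℤ (m ^ (w i : ℕ) * x i) := hm i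
          have hid : (x i) ^ (k + 1) * (m * t) ^ (w i : ℕ)
              = (m ^ (w i : ℕ) * x i) * ((x i) ^ k * t ^ (w i : ℕ)) := by
            rw [mul_pow, pow_succ]
            ring
          rw [hid]
          exact hmm.mul ht
      rw [aux_mem_one_iff]
      exact IsIntegral.of_pow (w i).pos (by rwa [mul_pow])
  · -- the inverse of J⁻¹ is J itself
    intro y
    rw [inv_inv, memJ]
    constructor
    · intro h i; rw [aux_mem_one_iff]; exact h i
    · intro h i; exact aux_mem_one_iff.mp (h i)
end

section
/- Let K be a number field, let w = (w_0, ..., w_n) be a tuple of positive integers, and let (b_0, ..., b_n) be a tuple of fractional ideals of O_K, not all zero. Then the scaling ideal I_w(b_0, ..., b_n) (the intersection of all fractional ideals a with b_i ⊆ a^{w_i} for all i) is a nonzero fractional ideal whose inverse is {a ∈ K : a^{w_i} b_i ⊆ O_K for i = 0, ..., n}. -/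
open NumberField FractionalIdeal
open scoped nonZeroDivisors

section Aux

variable {K : Type*} [Field K] [NumberField K]

/-- If a power of `x` lies in the image of `𝓞 K`, then so does `x`. -/
lemma aux_int {x : K} {w : ℕ} (hw : w ≠ 0)
    (hx : x ^ w ∈ (algebraMap (𝓞 K) K).range) :
    x ∈ (algebraMap (𝓞 K) K).range := by
  obtain ⟨a, ha⟩ := hx
  have hint : IsIntegral (𝓞 K) x := by
    refine ⟨Polynomial.X ^ w - Polynomial.C a, Polynomial.monic_X_pow_sub_C a hw, ?_⟩
    simp [ha]
  obtain ⟨y, hy⟩ := IsIntegrallyClosed.isIntegral_iff.mp hint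
  exact ⟨y, hy⟩

/-- The key convexity-type fact: the set `{x | x ^ w * s ∈ 𝓞 K}` is closed under
addition. -/
lemma aux_add {x y s : K} {w : ℕ} (hw : w ≠ 0)
    (hx : x ^ w * s ∈ (algebraMap (𝓞 K) K).range)
    (hy : y ^ w * s ∈ (algebraMap (𝓞 K) K).range) :
    (x + y) ^ w * s ∈ (algebraMap (𝓞 K) K).range := by
  rw [add_pow, Finset.sum_mul]
  refine Subring.sum_mem _ fun k hk => ?_
  have hkw : k ≤ w := Nat.lt_succ_iff.mp (Finset.mem_range.mp hk)
  obtain ⟨m, rfl⟩ : ∃ m, w = k + m := ⟨w - k, (Nat.add_sub_cancel' hkw).symm⟩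
  have hmid : x ^ k * y ^ (k + m - k) * s ∈ (algebraMap (𝓞 K) K).range := by
    refine aux_int hw ?_
    have : (x ^ k * y ^ (k + m - k) * s) ^ (k + m)
        = (x ^ (k + m) * s) ^ k * (y ^ (k + m) * s) ^ m := by
      rw [Nat.add_sub_cancel_left]
      ring
    rw [this]
    exact mul_mem (pow_mem hx k) (pow_mem hy m)
  have : x ^ k * y ^ (k + m - k) * ↑((k + m).choose k) * s
      = ((k + m).choose k : K) * (x ^ k * y ^ (k + m - k) * s) := by ring
  rw [this]
  exact mul_mem (natCast_mem _ _) hmid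

end Aux

/-- The scaling ideal `I_w(b_0, …, b_n)` of a tuple of fractional ideals, not all zero,
is a nonzero fractional ideal (there is a fractional ideal whose underlying set is the
intersection of all fractional ideals `a` with `b i ⊆ a ^ (w i)` for all `i`), and its
inverse equals `{a ∈ K | a ^ (w i) • b i ⊆ 𝓞 K for all i}`. -/
theorem scaling_ideal_of_ideals_exists_nonzero_and_inv (K : Type*) [Field K] [NumberField K]
    (n : ℕ) (w : Fin (n + 1) → ℕ+) (b : Fin (n + 1) → FractionalIdeal (𝓞 K)⁰ K)
    (hb : b ≠ 0) :
    ∃ I : FractionalIdeal (𝓞 K)⁰ K, I ≠ 0 ∧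
      (∀ y : K, y ∈ I ↔
        ∀ a : FractionalIdeal (𝓞 K)⁰ K, (∀ i, b i ≤ a ^ (w i : ℕ)) → y ∈ a) ∧
      (∀ y : K, y ∈ I⁻¹ ↔
        ∀ i, spanSingleton (𝓞 K)⁰ (y ^ (w i : ℕ)) * b i ≤ 1) := by
  have hwne : ∀ i, (w i : ℕ) ≠ 0 := fun i => (w i).ne_zero
  -- the submodule J = {y | ∀ i, ∀ t ∈ b i, y ^ w i * t ∈ 𝓞 K}
  set Jsub : Submodule (𝓞 K) K :=
    { carrier := {y : K | ∀ i, ∀ t ∈ b i, y ^ (w i : ℕ) * t ∈ (algebraMap (𝓞 K) K).range}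
      zero_mem' := by
        intro i t ht
        simp [zero_pow (hwne i)]
      add_mem' := by
        intro x y hx hy i t ht
        exact aux_add (hwne i) (hx i t ht) (hy i t ht)
      smul_mem' := by
        intro c x hx i t ht
        have : (c • x) ^ (w i : ℕ) * t
            = (algebraMap (𝓞 K) K c) ^ (w i : ℕ) * (x ^ (w i : ℕ) * t) := by
          rw [Algebra.smul_def]; ring
        rw [this]
        exact mul_mem (pow_mem ((algebraMap (𝓞 K) K).mem_range_self c) _) (hx i t ht) } with hJsub
  -- a nonzero index
  obtain ⟨i₀, hi₀⟩ := Function.ne_iff.mp hb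
  -- a nonzero integer in b i₀
  obtain ⟨x₀, hx₀ne, hx₀mem⟩ := exists_ne_zero_mem_isInteger hi₀
  -- J is a fractional ideal
  have hfrac : IsFractional (𝓞 K)⁰ Jsub := by
    refine ⟨x₀, mem_nonZeroDivisors_of_ne_zero hx₀ne, ?_⟩
    intro y hy
    have h1 : y ^ (w i₀ : ℕ) * algebraMap (𝓞 K) K x₀ ∈ (algebraMap (𝓞 K) K).range :=
      hy i₀ _ hx₀mem
    have h2 : (x₀ • y) ^ (w i₀ : ℕ) ∈ (algebraMap (𝓞 K) K).range := by
      obtain ⟨m, hm⟩ : ∃ m, (w i₀ : ℕ) = m + 1 := ⟨(w i₀ : ℕ) - 1, by have := hwne i₀; omega⟩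
      have heq : (x₀ • y) ^ (w i₀ : ℕ)
          = (algebraMap (𝓞 K) K x₀) ^ m
            * (y ^ (w i₀ : ℕ) * algebraMap (𝓞 K) K x₀) := by
        rw [Algebra.smul_def, hm]; ring
      rw [heq]
      exact mul_mem (pow_mem ((algebraMap (𝓞 K) K).mem_range_self x₀) _) h1
    exact aux_int (hwne i₀) h2
  set J : FractionalIdeal (𝓞 K)⁰ K := ⟨Jsub, hfrac⟩ with hJ
  have memJ : ∀ y : K, y ∈ J ↔
      ∀ i, ∀ t ∈ b i, y ^ (w i : ℕ) * t ∈ (algebraMap (𝓞 K) K).range := fun y => Iff.rfl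
  -- J is nonzero
  have hJne : J ≠ 0 := by
    classical
    choose a ha hint using fun i => (b i).isFractional
    have hprodne : (∏ i, a i) ≠ 0 := by
      intro h
      have : ∀ i, a i ≠ 0 := fun i =>
        nonZeroDivisors.ne_zero (ha i)
      exact absurd h (Finset.prod_ne_zero_iff.mpr fun i _ => this i)
    intro h0
    have : (algebraMap (𝓞 K) K (∏ i, a i)) ∈ J := by
      rw [memJ]
      intro i t ht
      have hit : algebraMap (𝓞 K) K (a i) * t ∈ (algebraMap (𝓞 K) K).range := by
        obtain ⟨r, hr⟩ := hint i t ht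
        exact ⟨r, by rw [hr, Algebra.smul_def]⟩
      obtain ⟨m, hm⟩ : ∃ m, (w i : ℕ) = m + 1 := ⟨(w i : ℕ) - 1, by have := hwne i; omega⟩
      have hPE : (algebraMap (𝓞 K) K (∏ i, a i))
          = (algebraMap (𝓞 K) K (∏ j ∈ Finset.univ.erase i, a j))
            * (algebraMap (𝓞 K) K (a i)) := by
        rw [← _root_.map_mul, Finset.prod_erase_mul _ _ (Finset.mem_univ i)]
      have heq : (algebraMap (𝓞 K) K (∏ i, a i)) ^ (w i : ℕ) * t
          = ((algebraMap (𝓞 K) K (∏ i, a i)) ^ m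
              * (algebraMap (𝓞 K) K (∏ j ∈ Finset.univ.erase i, a j)))
            * (algebraMap (𝓞 K) K (a i) * t) := by
        calc (algebraMap (𝓞 K) K (∏ i, a i)) ^ (w i : ℕ) * t
            = (algebraMap (𝓞 K) K (∏ i, a i)) ^ m
              * ((algebraMap (𝓞 K) K (∏ j ∈ Finset.univ.erase i, a j))
                * (algebraMap (𝓞 K) K (a i))) * t := by rw [← hPE, hm, pow_succ]
          _ = _ := by ring
      rw [heq]
      exact mul_mem (mul_mem (pow_mem ((algebraMap (𝓞 K) K).mem_range_self _) _)
        ((algebraMap (𝓞 K) K).mem_range_self _)) hit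
    rw [h0] at this
    have : algebraMap (𝓞 K) K (∏ i, a i) = 0 := by
      simpa using this
    exact hprodne (IsFractionRing.to_map_eq_zero_iff.mp this)
  -- span-mul characterization
  have spanmul : ∀ (x : K) (c : FractionalIdeal (𝓞 K)⁰ K),
      spanSingleton (𝓞 K)⁰ x * c ≤ 1 ↔
        ∀ t ∈ c, x * t ∈ (algebraMap (𝓞 K) K).range := by
    intro x c
    constructor
    · intro h t ht
      have := h (mul_mem_mul (mem_spanSingleton_self _ x) ht)
      exact (mem_one_iff _).mp this
    · intro h
      rw [mul_le]
      intro i hi j hj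
      obtain ⟨z, rfl⟩ := (mem_spanSingleton _).mp hi
      have : z • x * j = z • (x * j) := by rw [Algebra.smul_def, Algebra.smul_def]; ring
      rw [this]
      obtain ⟨r, hr⟩ := h j hj
      exact (mem_one_iff _).mpr ⟨z * r, by rw [_root_.map_mul, hr, Algebra.smul_def]⟩
  have memJ' : ∀ y : K, y ∈ J ↔
      ∀ i, spanSingleton (𝓞 K)⁰ (y ^ (w i : ℕ)) * b i ≤ 1 := by
    intro y
    rw [memJ]
    exact forall_congr' fun i => (spanmul _ _).symm
  refine ⟨J⁻¹, inv_ne_zero hJne, ?_, ?_⟩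
  · intro y
    constructor
    · -- y ∈ J⁻¹ → y in every admissible a
      intro hy a hble
      have hane : a ≠ 0 := by
        intro h
        have hb0 := hble i₀
        rw [h, zero_pow (hwne i₀)] at hb0
        exact hi₀ (_root_.le_zero_iff.mp hb0)
      have hainv : a⁻¹ ≤ J := by
        intro z hz
        have hz : z ∈ a⁻¹ := hz
        show z ∈ J
        rw [memJ]
        intro i t ht
        have hz1 : spanSingleton (𝓞 K)⁰ z * a ≤ 1 := by
          rw [spanmul]
          intro u hu
          exact (mem_one_iff _).mp ((mem_inv_iff hane).mp hz u hu)
        have hpow : (spanSingleton (𝓞 K)⁰ z * a) ^ (w i : ℕ) ≤ 1 := by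
          have : ∀ m : ℕ, (spanSingleton (𝓞 K)⁰ z * a) ^ m ≤ 1 := by
            intro m
            induction m with
            | zero => simp
            | succ m ih =>
              rw [pow_succ]
              refine mul_le.mpr fun p hp q hq => ?_
              obtain ⟨p', hp'⟩ := (mem_one_iff _).mp (ih hp)
              obtain ⟨q', hq'⟩ := (mem_one_iff _).mp (hz1 hq)
              exact (mem_one_iff _).mpr ⟨p' * q', by rw [_root_.map_mul, hp', hq']⟩
          exact this _
        have : z ^ (w i : ℕ) * t ∈ (spanSingleton (𝓞 K)⁰ z * a) ^ (w i : ℕ) := by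
          rw [mul_pow, spanSingleton_pow]
          exact mul_mem_mul (mem_spanSingleton_self _ _) (hble i ht)
        exact (mem_one_iff _).mp (hpow this)
      rw [← inv_inv a]
      rw [mem_inv_iff (inv_ne_zero hane)]
      intro z hz
      exact (mem_inv_iff hJne).mp hy z (hainv hz)
    · -- converse: apply to a := J⁻¹
      intro h
      refine h J⁻¹ fun i => ?_
      rw [inv_pow]
      intro t ht
      have ht : t ∈ b i := ht
      show t ∈ (J ^ (w i : ℕ))⁻¹
      rw [mem_inv_iff (pow_ne_zero _ hJne)]
      intro x hx
      have hx' : x ∈ (Jsub : Submodule (𝓞 K) K) ^ (w i : ℕ) := by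
        have := (coe_pow J (w i : ℕ)) ▸ (SetLike.mem_coe.mpr hx : x ∈ ((J ^ (w i : ℕ) :
          FractionalIdeal (𝓞 K)⁰ K) : Submodule (𝓞 K) K))
        exact this
      -- prove by induction: ∀ m, x ∈ Jsub ^ m → x ^ (w i) * t ^ m ∈ 𝓞 K
      have key : ∀ (m : ℕ) (x : K), x ∈ (Jsub : Submodule (𝓞 K) K) ^ m →
          x ^ (w i : ℕ) * t ^ m ∈ (algebraMap (𝓞 K) K).range := by
        intro m x hx
        induction hx using Submodule.pow_induction_on_left' with
        | algebraMap r =>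
          rw [pow_zero, mul_one, ← map_pow]
          exact ⟨r ^ (w i : ℕ), rfl⟩
        | add x y m hx hy ihx ihy =>
          exact aux_add (hwne i) ihx ihy
        | mem_mul z hz m x hx ih =>
          have : (z * x) ^ (w i : ℕ) * t ^ (m + 1)
              = (z ^ (w i : ℕ) * t) * (x ^ (w i : ℕ) * t ^ m) := by ring
          rw [this]
          exact mul_mem (hz i t ht) ih
      have hfin : x ^ (w i : ℕ) * t ^ (w i : ℕ) ∈ (algebraMap (𝓞 K) K).range :=
        key _ x hx'
      have : t * x ∈ (algebraMap (𝓞 K) K).range := by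
        refine aux_int (hwne i) ?_
        rw [mul_pow]
        rw [mul_comm]
        exact hfin
      obtain ⟨r, hr⟩ := this
      exact (mem_one_iff _).mpr ⟨r, hr⟩
  · intro y
    rw [inv_inv]
    exact memJ' y
end

section
/- Let K be a number field, let z ∈ K, and let h = x^d + c_1 x^{d-1} + ... + c_d ∈ K[x] be a monic polynomial with h(z) = 0. Suppose b_1, ..., b_d are fractional ideals of O_K with c_i ∈ b_i for all i. Then z ∈ I_{(1,2,...,d)}(b_1, ..., b_d), where I_{(1,...,d)}(b_1,...,b_d) is the intersection of all fractional ideals a with b_i ⊆ a^i for all i. -/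
open NumberField FractionalIdeal
open scoped nonZeroDivisors

/-- Scaling-root lemma: if `z ∈ K` is a root of the monic polynomial
`x^d + c 0 * x^(d-1) + ⋯ + c (d-1)` (where `c i` plays the role of `c_{i+1}`),
the fractional ideals `b i` satisfy `c i ∈ b i`, and `I` is the scaling ideal
`I_{(1,…,d)}(b_1, …, b_d)` (the least fractional ideal `a` with `b i ⊆ a ^ (i+1)`
for all `i`), then `z ∈ I`. -/
theorem scaling_root (K : Type*) [Field K] [NumberField K]
    (d : ℕ) (hd : 0 < d) (z : K) (c : Fin d → K)
    (hroot : z ^ d + ∑ i : Fin d, c i * z ^ (d - (i.val + 1)) = 0)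
    (b : Fin d → FractionalIdeal (𝓞 K)⁰ K) (hc : ∀ i, c i ∈ b i)
    (I : FractionalIdeal (𝓞 K)⁰ K)
    (hI : ∀ a : FractionalIdeal (𝓞 K)⁰ K, (∀ i : Fin d, b i ≤ a ^ (i.val + 1)) ↔ I ≤ a) :
    z ∈ I := by
  classical
  by_cases hz : z = 0
  · subst hz; exact zero_mem (I : Submodule (𝓞 K) K)
  have hbI : ∀ i : Fin d, b i ≤ I ^ (i.val + 1) := (hI I).mpr le_rfl
  have hI0 : I ≠ 0 := by
    intro h0
    apply hz
    have hc0 : ∀ i, c i = 0 := by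
      intro i
      have h1 := hbI i
      rw [h0, zero_pow (Nat.succ_ne_zero _)] at h1
      simpa using h1 (hc i)
    have hzd : z ^ d = 0 := by simpa [hc0] using hroot
    exact pow_eq_zero_iff hd.ne' |>.mp hzd
  -- every element of I⁻¹ times z is integral
  have hzy : ∀ y ∈ I⁻¹, z * y ∈ (1 : FractionalIdeal (𝓞 K)⁰ K) := by
    intro y hy
    have hyp : ∀ n : ℕ, y ^ n ∈ (I⁻¹ : FractionalIdeal (𝓞 K)⁰ K) ^ n := by
      intro n
      induction n with
      | zero => simpa using FractionalIdeal.one_mem_one _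
      | succ n ih =>
        rw [pow_succ, pow_succ]
        exact FractionalIdeal.mul_mem_mul ih hy
    have hcoef : ∀ i : Fin d, ∃ a : 𝓞 K,
        algebraMap (𝓞 K) K a = c i * y ^ (i.val + 1) := by
      intro i
      have h1 : c i * y ^ (i.val + 1) ∈ I ^ (i.val + 1) * I⁻¹ ^ (i.val + 1) :=
        FractionalIdeal.mul_mem_mul (hbI i (hc i)) (hyp (i.val + 1))
      rw [← mul_pow, mul_inv_cancel₀ hI0, one_pow] at h1
      exact (FractionalIdeal.mem_one_iff _).mp h1
    choose a ha using hcoef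
    have hint : IsIntegral (𝓞 K) (z * y) := by
      refine ⟨Polynomial.X ^ d +
        ∑ i : Fin d, Polynomial.C (a i) * Polynomial.X ^ (d - (i.val + 1)), ?_, ?_⟩
      · apply Polynomial.monic_X_pow_add
        refine lt_of_le_of_lt (Polynomial.degree_sum_le _ _) ?_
        rw [Finset.sup_lt_iff (by exact_mod_cast WithBot.bot_lt_coe d)]
        intro i _
        refine lt_of_le_of_lt (Polynomial.degree_C_mul_X_pow_le _ _) ?_
        exact_mod_cast Nat.sub_lt hd (Nat.succ_pos _)
      · have expand : ∀ i : Fin d,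
            algebraMap (𝓞 K) K (a i) * (z * y) ^ (d - (i.val + 1)) =
              c i * z ^ (d - (i.val + 1)) * y ^ d := by
          intro i
          have hle : i.val + 1 ≤ d := i.isLt
          rw [ha i, mul_pow]
          calc c i * y ^ (i.val + 1) * (z ^ (d - (i.val + 1)) * y ^ (d - (i.val + 1)))
              = c i * z ^ (d - (i.val + 1)) * (y ^ (i.val + 1) * y ^ (d - (i.val + 1))) := by
                ring
            _ = c i * z ^ (d - (i.val + 1)) * y ^ d := by
                rw [← pow_add, Nat.add_sub_cancel' hle]
        simp only [Polynomial.eval₂_add, Polynomial.eval₂_pow, Polynomial.eval₂_X,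
          Polynomial.eval₂_finset_sum, Polynomial.eval₂_mul, Polynomial.eval₂_C]
        calc (z * y) ^ d + ∑ i : Fin d,
              algebraMap (𝓞 K) K (a i) * (z * y) ^ (d - (i.val + 1))
            = z ^ d * y ^ d + ∑ i : Fin d, c i * z ^ (d - (i.val + 1)) * y ^ d := by
              rw [mul_pow]
              congr 1
              exact Finset.sum_congr rfl fun i _ => expand i
          _ = (z ^ d + ∑ i : Fin d, c i * z ^ (d - (i.val + 1))) * y ^ d := by
              rw [add_mul, Finset.sum_mul]
          _ = 0 := by rw [hroot, zero_mul]
    obtain ⟨w, hw⟩ := IsIntegrallyClosed.isIntegral_iff.mp hint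
    exact (FractionalIdeal.mem_one_iff _).mpr ⟨w, hw⟩
  have key : FractionalIdeal.spanSingleton (𝓞 K)⁰ z * I⁻¹ ≤ 1 := by
    rw [FractionalIdeal.mul_le]
    intro x hx y hy
    obtain ⟨t, rfl⟩ := (FractionalIdeal.mem_spanSingleton _).mp hx
    have h1 : algebraMap (𝓞 K) K t ∈ (1 : FractionalIdeal (𝓞 K)⁰ K) :=
      FractionalIdeal.coe_mem_one _ t
    have h2 := FractionalIdeal.mul_mem_mul h1 (hzy y hy)
    rw [one_mul] at h2
    have : t • z * y = algebraMap (𝓞 K) K t * (z * y) := by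
      rw [Algebra.smul_def, mul_assoc]
    rwa [this]
  have hle : FractionalIdeal.spanSingleton (𝓞 K)⁰ z ≤ I := by
    have h3 : FractionalIdeal.spanSingleton (𝓞 K)⁰ z * I⁻¹ * I ≤ 1 * I :=
      mul_left_mono (a := I) key
    rwa [mul_assoc, mul_comm I⁻¹ I, mul_inv_cancel₀ hI0, mul_one, one_mul] at h3
  exact FractionalIdeal.spanSingleton_le_iff_mem.mp hle
end

section
/- Let K be a number field, w = (w_0, ..., w_n) a tuple of positive integers, and define for x ∈ K^{n+1}\{0} the quantity S(x) = N(I_w(x))^{-1} · ∏_{v archimedean} max_i |x_i|_v^{1/w_i}, where N denotes the absolute norm of a fractional ideal and the absolute values are the normalized archimedean absolute values of K. Then for every λ ∈ K^× and x ∈ K^{n+1}\{0}, we have S(λ^{w_0} x_0, ..., λ^{w_n} x_n) = S(x). In other words, the size function S descends to the weighted projective quotient K^×\(K^{n+1}\{0}). -/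
open NumberField FractionalIdeal
open scoped nonZeroDivisors

/-- The size function `S(x) = N(I_w(x))⁻¹ ∏_v max_i |x i|_v^{1/wᵢ}` (with normalized
archimedean absolute values `|y|_v = v(y)^{mult v}`) is invariant under the weighted
action `x ↦ (λ^{w_0} x_0, …, λ^{w_n} x_n)` of `K^×`; here `I` and `I'` denote the
scaling ideals of `x` and of the scaled tuple, characterized as least fractional ideals. -/
theorem size_invariant_under_weighted_action (K : Type*) [Field K] [NumberField K]
    (n : ℕ) (w : Fin (n + 1) → ℕ+) (x : Fin (n + 1) → K) (hx : x ≠ 0)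
    (lam : Kˣ)
    (I I' : FractionalIdeal (𝓞 K)⁰ K)
    (hI : ∀ a : FractionalIdeal (𝓞 K)⁰ K, (∀ i, x i ∈ a ^ (w i : ℕ)) ↔ I ≤ a)
    (hI' : ∀ a : FractionalIdeal (𝓞 K)⁰ K,
      (∀ i, (lam : K) ^ (w i : ℕ) * x i ∈ a ^ (w i : ℕ)) ↔ I' ≤ a) :
    (absNorm I' : ℝ)⁻¹ *
        ∏ v : InfinitePlace K, ⨆ i, (v ((lam : K) ^ (w i : ℕ) * x i)) ^ ((v.mult : ℝ) / (w i : ℕ))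
      = (absNorm I : ℝ)⁻¹ *
        ∏ v : InfinitePlace K, ⨆ i, (v (x i)) ^ ((v.mult : ℝ) / (w i : ℕ)) := by
  have hL : (lam : K) ≠ 0 := lam.ne_zero
  -- Step 1 : I' = (λ) * I
  have hxI : ∀ i, x i ∈ I ^ (w i : ℕ) := (hI I).mpr le_rfl
  have hxI' : ∀ i, (lam : K) ^ (w i : ℕ) * x i ∈ I' ^ (w i : ℕ) := (hI' I').mpr le_rfl
  have hII' : I' = spanSingleton (𝓞 K)⁰ (lam : K) * I := by
    refine le_antisymm ?_ ?_
    · rw [← hI']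
      intro i
      rw [mul_pow, spanSingleton_pow]
      exact mul_mem_mul (mem_spanSingleton_self _ _) (hxI i)
    · have h1 : I ≤ spanSingleton (𝓞 K)⁰ ((lam : K)⁻¹) * I' := by
        rw [← hI]
        intro i
        rw [mul_pow, spanSingleton_pow]
        have h2 := mul_mem_mul
          (mem_spanSingleton_self (𝓞 K)⁰ (((lam : K)⁻¹) ^ (w i : ℕ))) (hxI' i)
        have h3 : ((lam : K)⁻¹) ^ (w i : ℕ) * ((lam : K) ^ (w i : ℕ) * x i) = x i := by
          rw [← mul_assoc, ← mul_pow, inv_mul_cancel₀ hL, one_pow, one_mul]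
        rwa [h3] at h2
      calc spanSingleton (𝓞 K)⁰ (lam : K) * I
          ≤ spanSingleton (𝓞 K)⁰ (lam : K) *
              (spanSingleton (𝓞 K)⁰ ((lam : K)⁻¹) * I') := mul_le_mul_right h1 _
        _ = I' := by
            rw [← mul_assoc, spanSingleton_mul_spanSingleton,
              mul_inv_cancel₀ hL, spanSingleton_one, one_mul]
  -- Step 2 : norms
  have hnorm : (absNorm I' : ℝ) = |((Algebra.norm ℚ (lam : K) : ℚ) : ℝ)| * (absNorm I : ℝ) := by
    rw [hII', _root_.map_mul, absNorm_span_singleton]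
    push_cast
    ring
  -- Step 3 : places
  have key : ∀ v : InfinitePlace K,
      (⨆ i, (v ((lam : K) ^ (w i : ℕ) * x i)) ^ ((v.mult : ℝ) / (w i : ℕ)))
        = v (lam : K) ^ v.mult * ⨆ i, (v (x i)) ^ ((v.mult : ℝ) / (w i : ℕ)) := by
    intro v
    have hpt : ∀ i, (v ((lam : K) ^ (w i : ℕ) * x i)) ^ ((v.mult : ℝ) / (w i : ℕ))
        = v (lam : K) ^ v.mult * (v (x i)) ^ ((v.mult : ℝ) / (w i : ℕ)) := by
      intro i
      rw [_root_.map_mul, _root_.map_pow,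
        Real.mul_rpow (pow_nonneg (apply_nonneg v _) _) (apply_nonneg v _)]
      congr 1
      rw [← Real.rpow_natCast (v (lam : K)) (w i : ℕ),
        ← Real.rpow_mul (apply_nonneg v _), ← Real.rpow_natCast (v (lam : K)) v.mult]
      congr 1
      have hw : ((w i : ℕ) : ℝ) ≠ 0 := by
        exact_mod_cast (w i).ne_zero
      field_simp
    simp_rw [hpt, ← Real.mul_iSup_of_nonneg (pow_nonneg (apply_nonneg v _) _)]
  simp_rw [key]
  rw [Finset.prod_mul_distrib, InfinitePlace.prod_eq_abs_norm, hnorm, mul_inv, Rat.cast_abs]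
  have ha : |((Algebra.norm ℚ (lam : K) : ℚ) : ℝ)| ≠ 0 := by
    simp only [ne_eq, abs_eq_zero, Rat.cast_eq_zero]
    exact fun h => hL (Algebra.norm_eq_zero_iff.mp h)
  have : |((Algebra.norm ℚ (lam : K) : ℚ) : ℝ)|⁻¹ * (absNorm I : ℝ)⁻¹ *
      (|((Algebra.norm ℚ (lam : K) : ℚ) : ℝ)| *
        ∏ v : InfinitePlace K, ⨆ i, (v (x i)) ^ ((v.mult : ℝ) / (w i : ℕ)))
      = (|((Algebra.norm ℚ (lam : K) : ℚ) : ℝ)|⁻¹ * |((Algebra.norm ℚ (lam : K) : ℚ) : ℝ)|) *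
        ((absNorm I : ℝ)⁻¹ *
          ∏ v : InfinitePlace K, ⨆ i, (v (x i)) ^ ((v.mult : ℝ) / (w i : ℕ))) := by ring
  rw [this, inv_mul_cancel₀ ha, one_mul]
end

section
/- Let K be a number field, let u = (u_0, u_1) and w = (w_0, w_1) be pairs of positive integers, let e be a positive integer, and let f_0, f_1 ∈ K[x_0, x_1] be homogeneous (for the grading deg x_i = w_i) of degrees e·u_0 and e·u_1 respectively. Let a_i be the fractional ideal generated by the coefficients of f_i. Then for all z ∈ K^2 with f(z) = (f_0(z), f_1(z)) ≠ 0, we have I_u(f(z)) ⊆ I_u(a_0, a_1) · I_w(z)^e, where I_u and I_w denote scaling ideals for the respective weights. -/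
open NumberField FractionalIdeal MvPolynomial
open scoped nonZeroDivisors

/-- Let `f₀, f₁ ∈ K[x₀,x₁]` be weighted homogeneous (for `deg xᵢ = wᵢ`) of degrees
`e·u₀` and `e·u₁`, let `aᵢ` be the fractional ideal generated by the coefficients of
`fᵢ`, and let `z ∈ K²` with `f(z) = (f₀(z), f₁(z)) ≠ 0`.  If `Ifz` is the scaling
ideal `I_u(f(z))`, `Iz` the scaling ideal `I_w(z)` and `Ia` the scaling ideal
`I_u(a₀, a₁)` (each characterized as least element), then
`I_u(f(z)) ⊆ I_u(a₀, a₁) · I_w(z)^e`. -/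
theorem scaling_ideal_image_le (K : Type*) [Field K] [NumberField K]
    (u w : Fin 2 → ℕ+) (e : ℕ+) (f : Fin 2 → MvPolynomial (Fin 2) K)
    (hf : ∀ j, (f j).IsWeightedHomogeneous (fun i => (w i : ℕ)) ((e : ℕ) * (u j : ℕ)))
    (a : Fin 2 → FractionalIdeal (𝓞 K)⁰ K)
    (ha : ∀ j, ((a j : FractionalIdeal (𝓞 K)⁰ K) : Submodule (𝓞 K) K)
      = Submodule.span (𝓞 K) {c : K | ∃ m, (f j).coeff m = c})
    (z : Fin 2 → K) (hfz : (fun j => MvPolynomial.eval z (f j)) ≠ 0)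
    (Ifz Iz Ia : FractionalIdeal (𝓞 K)⁰ K)
    (hIfz : ∀ b : FractionalIdeal (𝓞 K)⁰ K,
      (∀ j, MvPolynomial.eval z (f j) ∈ b ^ (u j : ℕ)) ↔ Ifz ≤ b)
    (hIz : ∀ b : FractionalIdeal (𝓞 K)⁰ K, (∀ i, z i ∈ b ^ (w i : ℕ)) ↔ Iz ≤ b)
    (hIa : ∀ b : FractionalIdeal (𝓞 K)⁰ K, (∀ j, a j ≤ b ^ (u j : ℕ)) ↔ Ia ≤ b) :
    Ifz ≤ Ia * Iz ^ (e : ℕ) := by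
  have hz : ∀ i, z i ∈ ((Iz : FractionalIdeal (𝓞 K)⁰ K) : Submodule (𝓞 K) K) ^ (w i : ℕ) := by
    intro i
    have h := (hIz Iz).mpr le_rfl i
    rwa [← FractionalIdeal.mem_coe, FractionalIdeal.coe_pow] at h
  have haIa : ∀ j, a j ≤ Ia ^ (u j : ℕ) := (hIa Ia).mpr le_rfl
  refine (hIfz _).mp fun j => ?_
  rw [← FractionalIdeal.mem_coe, FractionalIdeal.coe_pow, FractionalIdeal.coe_mul,
    FractionalIdeal.coe_pow, MvPolynomial.eval_eq']
  refine Submodule.sum_mem _ fun m hm => ?_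
  have hdeg : ∑ i, m i * (w i : ℕ) = (e : ℕ) * (u j : ℕ) := by
    have h := hf j (MvPolynomial.mem_support_iff.mp hm)
    rw [Finsupp.weight_apply, Finsupp.sum_fintype] at h
    · simpa [smul_eq_mul] using h
    · intro i; simp
  have hc : MvPolynomial.coeff m (f j)
      ∈ ((Ia : FractionalIdeal (𝓞 K)⁰ K) : Submodule (𝓞 K) K) ^ (u j : ℕ) := by
    have h1 : MvPolynomial.coeff m (f j) ∈ a j := by
      rw [← FractionalIdeal.mem_coe, ha j]
      exact Submodule.subset_span ⟨m, rfl⟩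
    have h2 : MvPolynomial.coeff m (f j) ∈ Ia ^ (u j : ℕ) := haIa j h1
    rwa [← FractionalIdeal.mem_coe, FractionalIdeal.coe_pow] at h2
  have hprod : (∏ i, z i ^ m i)
      ∈ ((Iz : FractionalIdeal (𝓞 K)⁰ K) : Submodule (𝓞 K) K) ^ ((e : ℕ) * (u j : ℕ)) := by
    rw [← hdeg, Fin.sum_univ_two, pow_add, Fin.prod_univ_two]
    refine Submodule.mul_mem_mul ?_ ?_
    · rw [mul_comm (m 0), pow_mul]; exact Submodule.pow_mem_pow _ (hz 0) _
    · rw [mul_comm (m 1), pow_mul]; exact Submodule.pow_mem_pow _ (hz 1) _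
  rw [mul_pow, ← pow_mul]
  exact Submodule.mul_mem_mul hc hprod
end

section
/- Let K be a number field. Let z ∈ K, m ≥ 1, and let ν be a fixed positive integer. Suppose c_1, ..., c_m ∈ K, fractional ideals c_1', ..., c_m' and a nonzero fractional ideal m' satisfy c_l ∈ c_l' · (m')^{l ν} for all l, and z^m + c_1 z^{m-1} + ... + c_m = 0. Then z ∈ I_{(1,...,m)}(c_1', ..., c_m') · (m')^ν. -/
open NumberField FractionalIdeal
open scoped nonZeroDivisors

/-- Combined scaling-root lemma: suppose `z ∈ K` satisfies the monic equation
`z^m + c 0 * z^(m-1) + ⋯ + c (m-1) = 0`, where `c l ∈ 𝔠 l * 𝔪 ^ ((l+1)·ν)` for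
fractional ideals `𝔠 l` and a nonzero fractional ideal `𝔪` and a fixed positive
integer `ν`.  If `I` is the scaling ideal `I_{(1,…,m)}(𝔠 1, …, 𝔠 m)` (the least
fractional ideal `a` with `𝔠 l ⊆ a ^ (l+1)` for all `l`), then `z ∈ I * 𝔪 ^ ν`. -/
theorem scaling_root_with_ideal_factor (K : Type*) [Field K] [NumberField K]
    (m : ℕ) (hm : 0 < m) (ν : ℕ+) (z : K) (c : Fin m → K)
    (𝔠 : Fin m → FractionalIdeal (𝓞 K)⁰ K)
    (𝔪 : FractionalIdeal (𝓞 K)⁰ K) (h𝔪 : 𝔪 ≠ 0)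
    (hc : ∀ l : Fin m, c l ∈ 𝔠 l * 𝔪 ^ ((l.val + 1) * (ν : ℕ)))
    (hroot : z ^ m + ∑ l : Fin m, c l * z ^ (m - (l.val + 1)) = 0)
    (I : FractionalIdeal (𝓞 K)⁰ K)
    (hI : ∀ a : FractionalIdeal (𝓞 K)⁰ K, (∀ l : Fin m, 𝔠 l ≤ a ^ (l.val + 1)) ↔ I ≤ a) :
    z ∈ I * 𝔪 ^ (ν : ℕ) := by
  have hI0 : ∀ l : Fin m, 𝔠 l ≤ I ^ (l.val + 1) := (hI I).mpr le_rfl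
  by_cases hIz : I = 0
  · have hc0 : ∀ l : Fin m, c l = 0 := by
      intro l
      have h1 : 𝔠 l = 0 := by
        have h2 := hI0 l
        rw [hIz, zero_pow (Nat.succ_ne_zero l.val)] at h2
        exact le_antisymm h2 (zero_le _)
      have h3 := hc l
      rw [h1, zero_mul] at h3
      simpa using h3
    have hz : z = 0 := by
      have hzm : z ^ m = 0 := by
        have h := hroot
        simp only [hc0, zero_mul, Finset.sum_const_zero, add_zero] at h
        exact h
      exact pow_eq_zero_iff hm.ne' |>.mp hzm
    simpa [hz] using zero_mem (I * 𝔪 ^ (ν : ℕ))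
  · set a : FractionalIdeal (𝓞 K)⁰ K := I * 𝔪 ^ (ν : ℕ) with ha
    have ha0 : a ≠ 0 := mul_ne_zero hIz (pow_ne_zero _ h𝔪)
    set b : FractionalIdeal (𝓞 K)⁰ K := spanSingleton (𝓞 K)⁰ z with hb
    have hle_sum : ∀ (f : Fin m → FractionalIdeal (𝓞 K)⁰ K) (l : Fin m), f l ≤ ∑ i, f i := by
      intro f l
      rw [← Finset.add_sum_erase _ f (Finset.mem_univ l), ← sup_eq_add]
      exact le_sup_left
    have hkey : ∀ l : Fin m, 𝔠 l * 𝔪 ^ ((l.val + 1) * (ν : ℕ)) ≤ a ^ (l.val + 1) := by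
      intro l
      rw [ha, mul_pow, ← pow_mul, mul_comm (ν : ℕ)]
      exact mul_le_mul_left (hI0 l) _
    set S : FractionalIdeal (𝓞 K)⁰ K :=
      ∑ l : Fin m, a ^ (l.val + 1) * b ^ (m - (l.val + 1)) with hS
    have hterm : ∀ l : Fin m, c l * z ^ (m - (l.val + 1)) ∈ S := by
      intro l
      have h1 : c l * z ^ (m - (l.val + 1)) ∈ a ^ (l.val + 1) * b ^ (m - (l.val + 1)) := by
        refine mul_mem_mul (hkey l (hc l)) ?_
        rw [hb, spanSingleton_pow]
        exact mem_spanSingleton_self _ _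
      exact hle_sum (fun l : Fin m => a ^ (l.val + 1) * b ^ (m - (l.val + 1))) l h1
    have hzm : z ^ m ∈ S := by
      have heq : z ^ m = -∑ l : Fin m, c l * z ^ (m - (l.val + 1)) :=
        eq_neg_of_add_eq_zero_left hroot
      rw [heq, ← mem_coe]
      exact Submodule.neg_mem _ (Submodule.sum_mem _ fun l _ => mem_coe.mpr (hterm l))
    have hbm : b ^ m ≤ S := by
      rw [hb, spanSingleton_pow, spanSingleton_le_iff_mem]
      exact hzm
    set d : FractionalIdeal (𝓞 K)⁰ K := b * a⁻¹ with hd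
    set F : FractionalIdeal (𝓞 K)⁰ K := ∑ l : Fin m, d ^ (m - (l.val + 1)) with hF
    have hsum_le : ∀ (f : Fin m → FractionalIdeal (𝓞 K)⁰ K) (G : FractionalIdeal (𝓞 K)⁰ K),
        (∀ l, f l ≤ G) → ∑ l : Fin m, f l ≤ G := by
      intro f G hf
      induction' (Finset.univ : Finset (Fin m)) using Finset.induction with i s hi ih
      · simpa using zero_le G
      · rw [Finset.sum_insert hi, ← sup_eq_add]
        exact sup_le (hf i) ih
    have hdm : d ^ m ≤ F := by
      have h2 : b ^ m * (a⁻¹) ^ m ≤ S * (a⁻¹) ^ m := mul_le_mul_left hbm _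
      have h4 : ∀ l : Fin m, (a ^ (l.val + 1) * b ^ (m - (l.val + 1))) * (a⁻¹) ^ m
          = d ^ (m - (l.val + 1)) := by
        intro l
        have hle : l.val + 1 ≤ m := l.isLt
        have hsplit : (a⁻¹) ^ m = (a⁻¹) ^ (l.val + 1) * (a⁻¹) ^ (m - (l.val + 1)) := by
          rw [← pow_add, Nat.add_sub_cancel' hle]
        calc (a ^ (l.val + 1) * b ^ (m - (l.val + 1))) * (a⁻¹) ^ m
            = (a * a⁻¹) ^ (l.val + 1) * (b * a⁻¹) ^ (m - (l.val + 1)) := by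
              rw [hsplit, mul_pow, mul_pow]; ring
          _ = d ^ (m - (l.val + 1)) := by
              rw [mul_inv_cancel₀ ha0, one_pow, one_mul, hd]
      calc d ^ m = b ^ m * (a⁻¹) ^ m := by rw [hd, mul_pow]
        _ ≤ S * (a⁻¹) ^ m := h2
        _ = ∑ l : Fin m, (a ^ (l.val + 1) * b ^ (m - (l.val + 1))) * (a⁻¹) ^ m := by
            rw [hS, Finset.sum_mul]
        _ = F := by rw [hF]; exact Finset.sum_congr rfl fun l _ => h4 l
    have hF1 : (1 : FractionalIdeal (𝓞 K)⁰ K) ≤ F := by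
      have hlast : m - ((⟨m - 1, by omega⟩ : Fin m).val + 1) = 0 := by simp; omega
      have := hle_sum (fun l : Fin m => d ^ (m - (l.val + 1))) (⟨m - 1, by omega⟩ : Fin m)
      simp only [hlast, pow_zero] at this
      exact this
    have hF0 : F ≠ 0 := by
      intro h
      have h1 : (1 : K) ∈ F := hF1 (one_mem_one _)
      rw [h] at h1
      exact one_ne_zero (mem_zero_iff _ |>.mp h1)
    have hdF : d * F ≤ F := by
      rw [hF, Finset.mul_sum]
      refine hsum_le _ _ fun l => ?_
      have hpow : d * d ^ (m - (l.val + 1)) = d ^ (m - l.val) := by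
        rw [← pow_succ']
        congr 1
        omega
      rw [hpow]
      rcases Nat.eq_zero_or_pos l.val with h0 | h0
      · rw [h0, Nat.sub_zero]; exact hdm
      · have hlt : l.val - 1 < m := by omega
        have := hle_sum (fun l : Fin m => d ^ (m - (l.val + 1))) (⟨l.val - 1, hlt⟩ : Fin m)
        simpa using (by
          have hexp : m - ((l.val - 1) + 1) = m - l.val := by omega
          rwa [hexp] at this : d ^ (m - l.val) ≤ F)
    have hd1 : d ≤ 1 := by
      calc d = d * F * F⁻¹ := by rw [mul_assoc, mul_inv_cancel₀ hF0, mul_one]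
        _ ≤ F * F⁻¹ := mul_le_mul_left hdF _
        _ = 1 := mul_inv_cancel₀ hF0
    have hba : b ≤ a := by
      calc b = d * a := by rw [hd, mul_assoc, inv_mul_cancel₀ ha0, mul_one]
        _ ≤ 1 * a := mul_le_mul_left hd1 _
        _ = a := one_mul a
    rw [← spanSingleton_le_iff_mem (S := (𝓞 K)⁰)]
    exact hba
end

section
/- Let K be a number field, w = (w_0, ..., w_n) a tuple of positive integers, m a nonzero fractional ideal of O_K, and b_0, ..., b_n fractional ideals not all zero. Then I_w(b_0 m^{w_0}, ..., b_n m^{w_n}) = I_w(b_0, ..., b_n) · m, where I_w denotes the scaling ideal for fractional-ideal tuples. -/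
open NumberField FractionalIdeal
open scoped nonZeroDivisors

/-- Multiplicativity of the scaling ideal:
`I_w(b₀ 𝔪^{w₀}, …, b_n 𝔪^{w_n}) = I_w(b₀, …, b_n) · 𝔪` for a nonzero fractional ideal
`𝔪` and fractional ideals `b i`, not all zero.  Here `I` is the scaling ideal of the
tuple `b` (the least fractional ideal `a` with `b i ⊆ a ^ (w i)` for all `i`), and the
conclusion characterizes `I · 𝔪` as the scaling ideal of the scaled tuple. -/
theorem scaling_ideal_mul (K : Type*) [Field K] [NumberField K]
    (n : ℕ) (w : Fin (n + 1) → ℕ+)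
    (𝔪 : FractionalIdeal (𝓞 K)⁰ K) (h𝔪 : 𝔪 ≠ 0)
    (b : Fin (n + 1) → FractionalIdeal (𝓞 K)⁰ K) (hb : b ≠ 0)
    (I : FractionalIdeal (𝓞 K)⁰ K)
    (hI : ∀ a : FractionalIdeal (𝓞 K)⁰ K, (∀ i, b i ≤ a ^ (w i : ℕ)) ↔ I ≤ a) :
    ∀ a : FractionalIdeal (𝓞 K)⁰ K,
      (∀ i, b i * 𝔪 ^ (w i : ℕ) ≤ a ^ (w i : ℕ)) ↔ I * 𝔪 ≤ a := by
  intro a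
  have hp : ∀ k : ℕ, 𝔪 ^ k ≠ 0 := fun k => pow_ne_zero k h𝔪
  constructor
  · intro h
    have hbi : ∀ i, b i ≤ (a * 𝔪⁻¹) ^ (w i : ℕ) := by
      intro i
      rw [← mul_le_mul_iff_left₀ (pos_iff_ne_zero.2 (hp (w i))), mul_pow, mul_assoc, inv_pow,
        inv_mul_cancel₀ (hp (w i)), mul_one]
      exact h i
    have hIle := (hI _).mp hbi
    calc I * 𝔪 ≤ (a * 𝔪⁻¹) * 𝔪 := (mul_le_mul_iff_left₀ (pos_iff_ne_zero.2 h𝔪)).mpr hIle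
      _ = a := by rw [mul_assoc, inv_mul_cancel₀ h𝔪, mul_one]
  · intro h i
    have hIle : I ≤ a * 𝔪⁻¹ := by
      rw [← mul_le_mul_iff_left₀ (pos_iff_ne_zero.2 h𝔪), mul_assoc, inv_mul_cancel₀ h𝔪, mul_one]
      exact h
    have hbi := (hI _).mpr hIle i
    calc b i * 𝔪 ^ (w i : ℕ) ≤ (a * 𝔪⁻¹) ^ (w i : ℕ) * 𝔪 ^ (w i : ℕ) :=
          (mul_le_mul_iff_left₀ (pos_iff_ne_zero.2 (hp (w i)))).mpr hbi
      _ = a ^ (w i : ℕ) := by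
          rw [← mul_pow, mul_assoc, inv_mul_cancel₀ h𝔪, mul_one]
end

section
/- Consider the weighted projective line P(1,3) over ℚ, whose ℚ-points are ℚ^×-orbits on ℚ^2\{0} under λ·(x_0, x_1) = (λ x_0, λ^3 x_1), with size function S_{(1,3)}([x_0, x_1]) = N(I_{(1,3)}(x))^{-1} max(|x_0|, |x_1|^{1/3}). Then for every prime p: (a) S_{(1,3)}([p, p^2]) = p and S_{(1,3)}([p^2, p^4]) = p; (b) S_{(1,3)}([1, p]) = p^{1/3} and S_{(1,3)}([1, p^2]) = p^{2/3}. Consequently, for the morphism φ(x_0, x_1) = (x_0^2, x_1^2) from P(1,3) to P(1,3), there is no real exponent t and constants 0 < c ≤ C such that c · S_{(1,3)}(x)^t ≤ S_{(1,3)}(φ(x)) ≤ C · S_{(1,3)}(x)^t for all x ∈ P(1,3)(ℚ). -/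
open FractionalIdeal
open scoped nonZeroDivisors

private lemma norm_int_self (n : ℤ) : Algebra.norm ℤ n = n := by
  simpa using Algebra.norm_algebraMap_of_basis (Basis.singleton Unit ℤ) n

private lemma absNorm_span_nat (p : ℕ) :
    absNorm (spanSingleton ℤ⁰ ((p : ℚ))) = p := by
  rw [show ((p:ℚ)) = algebraMap ℤ ℚ (p:ℤ) by simp, ← coeIdeal_span_singleton,
    coeIdeal_absNorm, Ideal.absNorm_span_singleton, norm_int_self]
  simp

private lemma mem_span_iff' (d x : ℚ) :
    x ∈ spanSingleton ℤ⁰ d ↔ ∃ m : ℤ, (m:ℚ) * d = x := by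
  rw [mem_spanSingleton]
  constructor <;> rintro ⟨m, h⟩ <;> exact ⟨m, by simpa [zsmul_eq_mul] using h⟩

private lemma mem_pow3 {a : FractionalIdeal ℤ⁰ ℚ} {x : ℚ} (h : x ∈ a) : x^3 ∈ a^3 := by
  have := mul_mem_mul h (mul_mem_mul h h)
  rw [show a^3 = a*(a*a) by ring, show x^3 = x*(x*x) by ring]
  exact this

/-- characterization with minimal ideal `1`. -/
private lemma charOne (x0 x1 : ℚ) (z0 z1 : ℤ) (h0 : (z0:ℚ) = x0) (h1 : (z1:ℚ) = x1)
    (hkey : ∀ d : ℚ, ∀ m n : ℤ, (m:ℚ) * d = x0 → (n:ℚ) * d^3 = x1 →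
      ∃ k : ℤ, (k:ℚ) * d = 1) :
    ∀ a : FractionalIdeal ℤ⁰ ℚ, (x0 ∈ a ∧ x1 ∈ a ^ 3) ↔ (1 : FractionalIdeal ℤ⁰ ℚ) ≤ a := by
  intro a
  constructor
  · rintro ⟨ha0, ha1⟩
    obtain ⟨d, rfl⟩ := (isPrincipal_iff a).mp inferInstance
    rw [spanSingleton_pow] at ha1
    obtain ⟨m, hm⟩ := (mem_span_iff' d x0).mp ha0
    obtain ⟨n, hn⟩ := (mem_span_iff' (d^3) x1).mp ha1
    obtain ⟨k, hk⟩ := hkey d m n hm hn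
    exact one_le.mpr ((mem_span_iff' d 1).mpr ⟨k, hk⟩)
  · intro h
    have h1a : (1:ℚ) ∈ a := one_le.mp h
    have h13 : (1:ℚ) ∈ a^3 := by simpa using mem_pow3 h1a
    constructor
    · have := Submodule.smul_mem (a : Submodule ℤ ℚ) z0 h1a
      simpa [h0] using this
    · have := Submodule.smul_mem ((a^3 : FractionalIdeal ℤ⁰ ℚ) : Submodule ℤ ℚ) z1 h13
      rw [← FractionalIdeal.mem_coe]
      simpa [h1] using this

/-- the key divisibility fact for `(p, p²)`. -/
private lemma key1 (p : ℕ) (hp : p.Prime) (d : ℚ) (m n : ℤ)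
    (hm : (m:ℚ) * d = (p:ℚ)) (hn : (n:ℚ) * d^3 = (p:ℚ)^2) :
    ∃ k : ℤ, (k:ℚ) * d = 1 := by
  have hp0 : ((p:ℚ)) ≠ 0 := Nat.cast_ne_zero.mpr hp.ne_zero
  have hpZ : Prime (p:ℤ) := Nat.prime_iff_prime_int.mp hp
  have hm0 : (m:ℚ) ≠ 0 := by
    intro h; rw [h, zero_mul] at hm; exact hp0 hm.symm
  have hd0 : d ≠ 0 := by
    intro h; rw [h, mul_zero] at hm; exact hp0 hm.symm
  have hd : d = (p:ℚ) / m := by field_simp; linarith [hm]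
  have hq : (n:ℚ) * (p:ℚ) = (m:ℚ)^3 := by
    rw [hd] at hn
    field_simp at hn
    -- hn : n * p^3 = p^2 * m^3
    have h2 : ((p:ℚ))^2 ≠ 0 := pow_ne_zero 2 hp0
    have : ((n:ℚ) * (p:ℚ)) * (p:ℚ)^2 = (m:ℚ)^3 * (p:ℚ)^2 := by linear_combination hn * (p:ℚ)^2
    exact mul_right_cancel₀ h2 this
  have hz : n * (p:ℤ) = m^3 := by exact_mod_cast hq
  have hdvd : (p:ℤ) ∣ m^3 := ⟨n, by rw [← hz]; ring⟩
  obtain ⟨k, hk⟩ := hpZ.dvd_of_dvd_pow hdvd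
  refine ⟨k, ?_⟩
  have hmq : ((m:ℤ):ℚ) = (p:ℚ) * (k:ℚ) := by exact_mod_cast congrArg (fun z : ℤ => (z:ℚ)) hk
  have : (p:ℚ) * ((k:ℚ) * d) = (p:ℚ) * 1 := by
    calc (p:ℚ) * ((k:ℚ) * d) = (m:ℚ) * d := by rw [hmq]; ring
    _ = (p:ℚ) := hm
    _ = (p:ℚ) * 1 := by ring
  exact mul_left_cancel₀ hp0 this

/-- characterization of `(p², p⁴)` with minimal ideal `spanSingleton p`. -/
private lemma charP (p : ℕ) (hp : p.Prime) :
    ∀ a : FractionalIdeal ℤ⁰ ℚ,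
      (((p:ℚ)^2 : ℚ) ∈ a ∧ ((p:ℚ)^4 : ℚ) ∈ a ^ 3) ↔ spanSingleton ℤ⁰ ((p:ℚ)) ≤ a := by
  have hp0 : ((p:ℚ)) ≠ 0 := Nat.cast_ne_zero.mpr hp.ne_zero
  have hpZ : Prime (p:ℤ) := Nat.prime_iff_prime_int.mp hp
  intro a
  constructor
  · rintro ⟨ha0, ha1⟩
    obtain ⟨d, rfl⟩ := (isPrincipal_iff a).mp inferInstance
    rw [spanSingleton_pow] at ha1
    obtain ⟨m, hm⟩ := (mem_span_iff' d _).mp ha0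
    obtain ⟨n, hn⟩ := (mem_span_iff' (d^3) _).mp ha1
    have hm0 : (m:ℚ) ≠ 0 := by
      intro h; rw [h, zero_mul] at hm
      exact (pow_ne_zero 2 hp0) hm.symm
    have hd0 : d ≠ 0 := by
      intro h; rw [h, mul_zero] at hm
      exact (pow_ne_zero 2 hp0) hm.symm
    have hd : d = (p:ℚ)^2 / m := by field_simp; linarith [hm]
    have hq : (n:ℚ) * (p:ℚ)^2 = (m:ℚ)^3 := by
      rw [hd] at hn
      field_simp at hn
      have h4 : ((p:ℚ))^4 ≠ 0 := pow_ne_zero 4 hp0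
      have : ((n:ℚ) * (p:ℚ)^2) * (p:ℚ)^4 = (m:ℚ)^3 * (p:ℚ)^4 := by linear_combination hn * (p:ℚ)^4
      exact mul_right_cancel₀ h4 this
    have hz : n * (p:ℤ)^2 = m^3 := by exact_mod_cast hq
    have hdvd : (p:ℤ) ∣ m^3 := ⟨n * p, by rw [← hz]; ring⟩
    obtain ⟨k, hk⟩ := hpZ.dvd_of_dvd_pow hdvd
    refine spanSingleton_le_iff_mem.mpr ((mem_span_iff' d _).mpr ⟨k, ?_⟩)
    have hmq : ((m:ℤ):ℚ) = (p:ℚ) * (k:ℚ) := by exact_mod_cast congrArg (fun z : ℤ => (z:ℚ)) hk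
    have : (p:ℚ) * ((k:ℚ) * d) = (p:ℚ) * (p:ℚ) := by
      calc (p:ℚ) * ((k:ℚ) * d) = (m:ℚ) * d := by rw [hmq]; ring
      _ = (p:ℚ)^2 := hm
      _ = (p:ℚ) * (p:ℚ) := by ring
    exact mul_left_cancel₀ hp0 this
  · intro h
    have hpa : ((p:ℚ)) ∈ a := spanSingleton_le_iff_mem.mp h
    constructor
    · have := Submodule.smul_mem (a : Submodule ℤ ℚ) (p:ℤ) hpa
      rw [show ((p:ℚ))^2 = ((p:ℤ):ℚ) * (p:ℚ) by push_cast; ring]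
      simpa [zsmul_eq_mul] using this
    · have h3 : ((p:ℚ))^3 ∈ a^3 := mem_pow3 hpa
      have := Submodule.smul_mem ((a^3 : FractionalIdeal ℤ⁰ ℚ) : Submodule ℤ ℚ) (p:ℤ) h3
      rw [show ((p:ℚ))^4 = ((p:ℤ):ℚ) * ((p:ℚ))^3 by push_cast; ring]
      rw [← FractionalIdeal.mem_coe]
      simpa [zsmul_eq_mul] using this

private lemma rpow_third (P : ℝ) (hP : 0 ≤ P) (n : ℕ) (r : ℝ) (h : (n:ℝ) * ((1:ℝ)/3) = r) :
    (P ^ n) ^ ((1:ℝ)/3) = P ^ r := by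
  rw [← Real.rpow_natCast P n, ← Real.rpow_mul hP, h]

/-- On the weighted projective line `P(1,3)` over `ℚ` with size function
`S(x₀,x₁) = N(I_{(1,3)}(x))⁻¹ · max(|x₀|, |x₁|^{1/3})`:
for every prime `p` one has `S(p, p²) = p`, `S(p², p⁴) = p`, `S(1, p) = p^{1/3}` and
`S(1, p²) = p^{2/3}`; consequently for the morphism `φ(x₀,x₁) = (x₀², x₁²)` there is
no exponent `t` and constants `0 < c ≤ C` with
`c·S(x)^t ≤ S(φ(x)) ≤ C·S(x)^t` for all `x`. -/
theorem no_exponent_for_squaring_on_P13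
    (S : ℚ × ℚ → ℝ)
    (hS : ∀ x : ℚ × ℚ, x ≠ 0 → ∀ I : FractionalIdeal ℤ⁰ ℚ,
      (∀ a : FractionalIdeal ℤ⁰ ℚ, (x.1 ∈ a ∧ x.2 ∈ a ^ 3) ↔ I ≤ a) →
      S x = (absNorm I : ℝ)⁻¹ * max |(x.1 : ℝ)| (|(x.2 : ℝ)| ^ ((1 : ℝ) / 3))) :
    (∀ p : ℕ, p.Prime →
      S ((p : ℚ), (p : ℚ) ^ 2) = p ∧
      S ((p : ℚ) ^ 2, (p : ℚ) ^ 4) = p ∧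
      S (1, (p : ℚ)) = (p : ℝ) ^ ((1 : ℝ) / 3) ∧
      S (1, (p : ℚ) ^ 2) = (p : ℝ) ^ ((2 : ℝ) / 3)) ∧
    ¬ ∃ (t c C : ℝ), 0 < c ∧ c ≤ C ∧
      ∀ x : ℚ × ℚ, x ≠ 0 →
        c * S x ^ t ≤ S (x.1 ^ 2, x.2 ^ 2) ∧ S (x.1 ^ 2, x.2 ^ 2) ≤ C * S x ^ t := by
  have hPA : ∀ p : ℕ, p.Prime →
      S ((p : ℚ), (p : ℚ) ^ 2) = p ∧
      S ((p : ℚ) ^ 2, (p : ℚ) ^ 4) = p ∧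
      S (1, (p : ℚ)) = (p : ℝ) ^ ((1 : ℝ) / 3) ∧
      S (1, (p : ℚ) ^ 2) = (p : ℝ) ^ ((2 : ℝ) / 3) := by
    intro p hp
    have hp0 : ((p:ℚ)) ≠ 0 := Nat.cast_ne_zero.mpr hp.ne_zero
    have hP0 : (0:ℝ) ≤ (p:ℝ) := Nat.cast_nonneg p
    have hP1 : (1:ℝ) ≤ (p:ℝ) := by exact_mod_cast hp.one_lt.le
    have hPpos : (0:ℝ) < (p:ℝ) := lt_of_lt_of_le one_pos hP1
    refine ⟨?_, ?_, ?_, ?_⟩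
    · -- S (p, p²) = p
      have hx : ((p:ℚ), (p:ℚ)^2) ≠ 0 := by
        simp [Prod.ext_iff, hp0]
      have hchar := charOne (p:ℚ) ((p:ℚ)^2) (p:ℤ) ((p:ℤ)^2)
        (by push_cast; ring) (by push_cast; ring) (key1 p hp)
      have := hS _ hx 1 hchar
      rw [absNorm_one] at this
      rw [this]
      have e1 : |(((p:ℚ):ℚ):ℝ)| = (p:ℝ) := by push_cast; exact abs_of_nonneg hP0
      have e2 : |((((p:ℚ)^2):ℚ):ℝ)| = (p:ℝ)^2 := by
        push_cast; exact abs_of_nonneg (by positivity)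
      simp only [e1, e2]
      rw [rpow_third _ hP0 2 ((2:ℝ)/3) (by norm_num)]
      have hle : (p:ℝ) ^ ((2:ℝ)/3) ≤ (p:ℝ) := by
        have := Real.rpow_le_rpow_of_exponent_le hP1 (by norm_num : (2:ℝ)/3 ≤ 1)
        rwa [Real.rpow_one] at this
      rw [max_eq_left hle]
      norm_num
    · -- S (p², p⁴) = p
      have hx : (((p:ℚ)^2 : ℚ), ((p:ℚ)^4 : ℚ)) ≠ 0 := by
        simp [Prod.ext_iff, pow_eq_zero_iff, hp0]
      have := hS _ hx (spanSingleton ℤ⁰ ((p:ℚ))) (charP p hp)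
      rw [absNorm_span_nat] at this
      rw [this]
      have e1 : |((((p:ℚ)^2):ℚ):ℝ)| = (p:ℝ)^2 := by
        push_cast; exact abs_of_nonneg (by positivity)
      have e2 : |((((p:ℚ)^4):ℚ):ℝ)| = (p:ℝ)^4 := by
        push_cast; exact abs_of_nonneg (by positivity)
      simp only [e1, e2]
      rw [rpow_third _ hP0 4 ((4:ℝ)/3) (by norm_num)]
      have hle : (p:ℝ) ^ ((4:ℝ)/3) ≤ (p:ℝ)^2 := by
        have := Real.rpow_le_rpow_of_exponent_le hP1 (by norm_num : (4:ℝ)/3 ≤ 2)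
        rwa [Real.rpow_two] at this
      rw [max_eq_left hle]
      push_cast
      field_simp
    · -- S (1, p) = p^{1/3}
      have hx : ((1:ℚ), (p:ℚ)) ≠ 0 := by simp [Prod.ext_iff]
      have hchar := charOne (1:ℚ) ((p:ℚ)) 1 (p:ℤ)
        (by push_cast; ring) (by push_cast; ring)
        (fun d m n hm hn => ⟨m, hm⟩)
      have := hS _ hx 1 hchar
      rw [absNorm_one] at this
      rw [this]
      have e1 : |((1:ℚ):ℝ)| = 1 := by norm_num
      have e2 : |(((p:ℚ)):ℝ)| = (p:ℝ) := by push_cast; exact abs_of_nonneg hP0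
      simp only [e1, e2]
      have hge : (1:ℝ) ≤ (p:ℝ) ^ ((1:ℝ)/3) := by
        have := Real.rpow_le_rpow_of_exponent_le hP1 (by norm_num : (0:ℝ) ≤ 1/3)
        rwa [Real.rpow_zero] at this
      rw [max_eq_right hge]
      norm_num
    · -- S (1, p²) = p^{2/3}
      have hx : ((1:ℚ), (p:ℚ)^2) ≠ 0 := by simp [Prod.ext_iff]
      have hchar := charOne (1:ℚ) ((p:ℚ)^2) 1 ((p:ℤ)^2)
        (by push_cast; ring) (by push_cast; ring)
        (fun d m n hm hn => ⟨m, hm⟩)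
      have := hS _ hx 1 hchar
      rw [absNorm_one] at this
      rw [this]
      have e1 : |((1:ℚ):ℝ)| = 1 := by norm_num
      have e2 : |((((p:ℚ)^2):ℚ):ℝ)| = (p:ℝ)^2 := by
        push_cast; exact abs_of_nonneg (by positivity)
      simp only [e1, e2]
      rw [rpow_third _ hP0 2 ((2:ℝ)/3) (by norm_num)]
      have hge : (1:ℝ) ≤ (p:ℝ) ^ ((2:ℝ)/3) := by
        have := Real.rpow_le_rpow_of_exponent_le hP1 (by norm_num : (0:ℝ) ≤ 2/3)
        rwa [Real.rpow_zero] at this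
      rw [max_eq_right hge]
      norm_num
  refine ⟨hPA, ?_⟩
  rintro ⟨t, c, C, hc, hcC, hbound⟩
  have hC : (0:ℝ) < C := lt_of_lt_of_le hc hcC
  obtain ⟨p, hple, hp⟩ := Nat.exists_infinite_primes (⌈C ^ (3:ℝ) / c⌉₊ + 1)
  obtain ⟨e1, e2, e3, e4⟩ := hPA p hp
  have hp0 : ((p:ℚ)) ≠ 0 := Nat.cast_ne_zero.mpr hp.ne_zero
  have hP0 : (0:ℝ) ≤ (p:ℝ) := Nat.cast_nonneg p
  have hP1 : (1:ℝ) ≤ (p:ℝ) := by exact_mod_cast hp.one_lt.le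
  have hPpos : (0:ℝ) < (p:ℝ) := lt_of_lt_of_le one_pos hP1
  -- first point
  have hx1 : ((p:ℚ), (p:ℚ)^2) ≠ 0 := by simp [Prod.ext_iff, hp0]
  have hb1 := hbound ((p:ℚ), (p:ℚ)^2) hx1
  have epair1 : ((((p:ℚ), (p:ℚ)^2).1) ^ 2, (((p:ℚ), (p:ℚ)^2).2) ^ 2)
      = (((p:ℚ)^2 : ℚ), ((p:ℚ)^4 : ℚ)) := by
    simp only [Prod.mk.injEq]
    exact ⟨trivial, by ring⟩
  rw [epair1, e2] at hb1
  have hSx1 : S ((p:ℚ), (p:ℚ)^2) = (p:ℝ) := e1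
  rw [hSx1] at hb1
  have A : c * (p:ℝ) ^ t ≤ (p:ℝ) := hb1.1
  -- second point
  have hx2 : ((1:ℚ), (p:ℚ)) ≠ 0 := by simp [Prod.ext_iff]
  have hb2 := hbound ((1:ℚ), (p:ℚ)) hx2
  have epair2 : ((((1:ℚ), (p:ℚ)).1) ^ 2, (((1:ℚ), (p:ℚ)).2) ^ 2)
      = ((1:ℚ), ((p:ℚ)^2 : ℚ)) := by
    simp only [Prod.mk.injEq]
    constructor <;> norm_num
  rw [epair2, e4, e3] at hb2
  have B : (p:ℝ) ^ ((2:ℝ)/3) ≤ C * ((p:ℝ) ^ ((1:ℝ)/3)) ^ t := hb2.2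
  -- rewrite the double rpow
  have hrw : ((p:ℝ) ^ ((1:ℝ)/3)) ^ t = (p:ℝ) ^ ((1:ℝ)/3 * t) := by
    rw [← Real.rpow_mul hP0]
  rw [hrw] at B
  -- cube B
  have hC3 : (0:ℝ) ≤ C ^ (3:ℝ) := Real.rpow_nonneg hC.le _
  have B3 : (p:ℝ) ^ (2:ℝ) ≤ C ^ (3:ℝ) * (p:ℝ) ^ t := by
    have h0 : (0:ℝ) ≤ (p:ℝ) ^ ((2:ℝ)/3) := Real.rpow_nonneg hP0 _
    have h := Real.rpow_le_rpow h0 B (by norm_num : (0:ℝ) ≤ 3)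
    rw [← Real.rpow_mul hP0, Real.mul_rpow hC.le (Real.rpow_nonneg hP0 _),
      ← Real.rpow_mul hP0] at h
    rw [show ((2:ℝ)/3)*3 = 2 by norm_num, show ((1:ℝ)/3 * t)*3 = t by ring] at h
    exact h
  have hQ : (p:ℝ) ^ (2:ℝ) = (p:ℝ) * (p:ℝ) := by
    rw [show (2:ℝ) = ((2:ℕ):ℝ) by norm_num, Real.rpow_natCast]; ring
  have s1 : c * ((p:ℝ) * (p:ℝ)) ≤ C ^ (3:ℝ) * (c * (p:ℝ) ^ t) := by
    have := mul_le_mul_of_nonneg_left B3 hc.le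
    rw [hQ] at this; linarith
  have s2 : C ^ (3:ℝ) * (c * (p:ℝ) ^ t) ≤ C ^ (3:ℝ) * (p:ℝ) := mul_le_mul_of_nonneg_left A hC3
  have key : c * (p:ℝ) ≤ C ^ (3:ℝ) := by
    have h' : (c * (p:ℝ)) * (p:ℝ) ≤ (C ^ (3:ℝ)) * (p:ℝ) := by linarith
    exact le_of_mul_le_mul_right h' hPpos
  have hbig : C ^ (3:ℝ) / c < (p:ℝ) := by
    refine lt_of_le_of_lt (Nat.le_ceil _) ?_
    have : (⌈C ^ (3:ℝ) / c⌉₊ : ℝ) + 1 ≤ (p:ℝ) := by exact_mod_cast hple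
    linarith
  have : C ^ (3:ℝ) < c * (p:ℝ) := by
    rw [div_lt_iff₀ hc] at hbig; linarith
  linarith
end
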